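/- arXiv:2211.01687 — 6 statements merged into one kernel-verified Lean document; each statement's English description precedes it below -/
import Mathlib

section
/- For any n-player binary game G, every quantum equilibrium induces a correlation lying in Q_corr(G). Precisely: if (M, ρ) is a quantum equilibrium for G with induced distribution P(a|t) = tr[ρ · ⨂_i M^{(i)}_{a_i|t_i}], then P is a quantum correlation and the canonical solution (id_T, id_A, P) is a Nash equilibrium for G. Consequently Q(G) ⊆ Q_corr(G). -/
open scoped BigOperators ComplexOrder

namespace QG

noncomputable section

variable {n : ℕ}

/-- Combine a value for player `i` with values for the other players,
producing a full profile. -/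
def merge {α : Fin n → Type*} (i : Fin n) (x : α i)
    (y : ∀ j : {j : Fin n // j ≠ i}, α j.1) : ∀ j, α j :=
  fun j => if h : j = i then cast (congrArg α h.symm) x else y ⟨j, h⟩

/-- `merge` specialised to Boolean profiles (questions and answers). -/
def mergeB (i : Fin n) (x : Bool) (y : ∀ _ : {j : Fin n // j ≠ i}, Bool) :
    Fin n → Bool :=
  merge (α := fun _ => Bool) i x y

/-- The trace of `ρ` multiplied by the tensor product of the matrices `N i`,
where the tensor product has entries `(⨂ᵢ Nᵢ)(x, y) = ∏ i, Nᵢ (x i) (y i)`. -/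
def tensorTrace {d : Fin n → ℕ}
    (ρ : Matrix (∀ i, Fin (d i)) (∀ i, Fin (d i)) ℂ)
    (N : ∀ i, Matrix (Fin (d i)) (Fin (d i)) ℂ) : ℂ :=
  Matrix.trace (ρ * Matrix.of fun x y => ∏ i, N i (x i) (y i))

/-- A quantum correlation over inputs `∀ i, R i` and outputs `∀ i, S i`:
it is realized by a density matrix `ρ` and POVMs `{M i r s}ₛ` for each player `i`
and input `r`. -/
def IsQuantumCorrelation {R S : Fin n → Type*} [∀ i, Fintype (S i)]
    (C : (∀ i, S i) → (∀ i, R i) → ℝ) : Prop :=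
  ∃ (d : Fin n → ℕ) (ρ : Matrix (∀ i, Fin (d i)) (∀ i, Fin (d i)) ℂ)
    (M : ∀ i, R i → S i → Matrix (Fin (d i)) (Fin (d i)) ℂ),
    ρ.PosSemidef ∧ ρ.trace = 1 ∧
    (∀ i r s, (M i r s).PosSemidef) ∧ (∀ i r, ∑ s, M i r s = 1) ∧
    ∀ s r, (C s r : ℂ) = tensorTrace ρ fun i => M i (r i) (s i)

/-- An `n`-player binary game: a nonempty set of valid questions `valid ⊆ {0,1}ⁿ`,
a prior distribution on questions supported on `valid`, and a payoff function
for each player (answers and questions are elements of `Fin n → Bool`). -/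
structure Game (n : ℕ) where
  valid : Set (Fin n → Bool)
  valid_nonempty : valid.Nonempty
  prior : (Fin n → Bool) → ℝ
  prior_nonneg : ∀ t, 0 ≤ prior t
  prior_sum_one : ∑ t, prior t = 1
  prior_support : ∀ t, t ∉ valid → prior t = 0
  payoff : Fin n → (Fin n → Bool) → (Fin n → Bool) → ℝ

/-- A solution for an `n`-player binary game: a correlation `C` over inputs
`∀ i, R i` and outputs `∀ i, S i`, and, for each player, a mixed strategy
given by a distribution `pdist i` on a finite set `Λ i` and functions
`f i : Bool → Λ i → R i` and `g i : Bool → S i → Λ i → Bool`. -/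
structure Solution (n : ℕ) where
  R : Fin n → Type
  S : Fin n → Type
  Λ : Fin n → Type
  [instR : ∀ i, Fintype (R i)]
  [instS : ∀ i, Fintype (S i)]
  [instΛ : ∀ i, Fintype (Λ i)]
  [instDecS : ∀ i, DecidableEq (S i)]
  C : (∀ i, S i) → (∀ i, R i) → ℝ
  C_nonneg : ∀ s r, 0 ≤ C s r
  C_sum_one : ∀ r, ∑ s, C s r = 1
  pdist : ∀ i, Λ i → ℝ
  pdist_nonneg : ∀ i l, 0 ≤ pdist i l
  pdist_sum_one : ∀ i, ∑ l, pdist i l = 1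
  f : ∀ i, Bool → Λ i → R i
  g : ∀ i, Bool → S i → Λ i → Bool

attribute [instance] Solution.instR Solution.instS Solution.instΛ Solution.instDecS

/-- The probability distribution on answers (given questions) induced by a solution:
`P(a|t) = Σ_{λ,s} C(s|f(t,λ)) π(λ) [g(t,s,λ) = a]`. -/
def Solution.induced (sol : Solution n) (a t : Fin n → Bool) : ℝ :=
  ∑ l : ∀ i, sol.Λ i, ∑ s : ∀ i, sol.S i,
    sol.C s (fun i => sol.f i (t i) (l i)) * (∏ i, sol.pdist i (l i)) *
      (if (fun i => sol.g i (t i) (s i) (l i)) = a then 1 else 0)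

/-- Nash equilibrium condition for a solution: no player `i` can improve their
expected payoff by, for any type `ti`, sending an alternative input `ri` to the
mediator and applying a deterministic function `μ` to the received advice. -/
def Solution.IsNashEq (sol : Solution n) (G : Game n) : Prop :=
  ∀ (i : Fin n) (ti : Bool) (ri : sol.R i) (μ : Bool → sol.S i → Bool),
    (∑ tm : ∀ _ : {j : Fin n // j ≠ i}, Bool, ∑ l : ∀ j, sol.Λ j, ∑ s : ∀ j, sol.S j,
      G.payoff i (fun j => sol.g j (mergeB i ti tm j) (s j) (l j)) (mergeB i ti tm) *
        sol.C s (fun j => sol.f j (mergeB i ti tm j) (l j)) *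
        G.prior (mergeB i ti tm) * ∏ j, sol.pdist j (l j))
    ≥ ∑ tm : ∀ _ : {j : Fin n // j ≠ i}, Bool, ∑ l : ∀ j, sol.Λ j, ∑ s : ∀ j, sol.S j,
      G.payoff i (mergeB i (μ ti (s i)) fun j => sol.g j.1 (tm j) (s j.1) (l j.1))
          (mergeB i ti tm) *
        sol.C s (merge i ri fun j => sol.f j.1 (tm j) (l j.1)) *
        G.prior (mergeB i ti tm) * ∏ j, sol.pdist j (l j)

/-- Nash equilibrium condition for the canonical solution `(id_T, id_A, P)` of a
distribution `P`: for every player `i`, types `ti, ri` and every deterministic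
function `μ`, `Σ_{t₋ᵢ,a} uᵢ(a,t) P(a|t) Π(t) ≥ Σ_{t₋ᵢ,a} uᵢ((μ(tᵢ,aᵢ),a₋ᵢ),t) P(a|(rᵢ,t₋ᵢ)) Π(t)`. -/
def CanonicalNashEq (G : Game n) (P : (Fin n → Bool) → (Fin n → Bool) → ℝ) : Prop :=
  ∀ (i : Fin n) (ti ri : Bool) (μ : Bool → Bool → Bool),
    (∑ tm : ∀ _ : {j : Fin n // j ≠ i}, Bool, ∑ a : Fin n → Bool,
      G.payoff i a (mergeB i ti tm) * P a (mergeB i ti tm) * G.prior (mergeB i ti tm))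
    ≥ ∑ tm : ∀ _ : {j : Fin n // j ≠ i}, Bool, ∑ a : Fin n → Bool,
      G.payoff i (Function.update a i (μ ti (a i))) (mergeB i ti tm) *
        P a (mergeB i ri tm) * G.prior (mergeB i ti tm)

/-!
The induced distribution is a quantum correlation by construction, realised by the same
state and POVMs; its values are real because `ρ` and a tensor product of POVM elements are
Hermitian. For the Nash condition, a deviation of player `i` that reports `rᵢ` instead of
`tᵢ` and relabels the advice by `μ` can be simulated quantumly: player `i` measures the
coarse-grained POVM `b ↦ ∑_{μ c = b} M i rᵢ c` for type `tᵢ`. Since `tensorTrace` is linear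
in player `i`'s factor, both deviations have the same expected payoff, so the quantum
equilibrium condition bounds it.
-/

lemma update_mergeB_self (i : Fin n) (x z : Bool) (y : ∀ _ : {j : Fin n // j ≠ i}, Bool) :
    Function.update (mergeB i x y) i z = mergeB i z y := by
  funext j
  rcases eq_or_ne j i with rfl | hj
  · simp [mergeB, merge]
  · simp [mergeB, merge, hj]

section Reindex
variable {ι β R : Type*} [Fintype ι] [DecidableEq ι] [Fintype β] [DecidableEq β]
  [NonUnitalNonAssocSemiring R]

def updateSwap (i : ι) : Equiv.Perm ((ι → β) × β) where
  toFun p := (Function.update p.1 i p.2, p.1 i)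
  invFun p := (Function.update p.1 i p.2, p.1 i)
  left_inv p := by simp
  right_inv p := by simp

theorem sum_mul_sum_fiber_update (i : ι) (μ : β → β) (f g : (ι → β) → R) :
    ∑ a, f a * ∑ c with μ c = a i, g (Function.update a i c)
      = ∑ a, f (Function.update a i (μ (a i))) * g a := by
  calc ∑ a, f a * ∑ c with μ c = a i, g (Function.update a i c)
      = ∑ p : (ι → β) × β,
          if μ p.2 = p.1 i then f p.1 * g (Function.update p.1 i p.2) else 0 := by
        simp only [Finset.mul_sum, Finset.sum_filter, mul_ite, mul_zero, Fintype.sum_prod_type]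
    _ = ∑ p : (ι → β) × β,
          if μ (p.1 i) = p.2 then f (Function.update p.1 i p.2) * g p.1 else 0 :=
        (Equiv.sum_comp (updateSwap i) _).symm.trans (by simp [updateSwap])
    _ = ∑ a, f (Function.update a i (μ (a i))) * g a := by
        simp only [Fintype.sum_prod_type, Finset.sum_ite_eq, Finset.mem_univ, if_true]

end Reindex

section TensorTrace

variable {d : Fin n → ℕ}

def tensor (N : ∀ i, Matrix (Fin (d i)) (Fin (d i)) ℂ) :
    Matrix (∀ i, Fin (d i)) (∀ i, Fin (d i)) ℂ :=
  Matrix.of fun x y => ∏ i, N i (x i) (y i)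

lemma tensorTrace_eq_trace (ρ : Matrix (∀ i, Fin (d i)) (∀ i, Fin (d i)) ℂ)
    (N : ∀ i, Matrix (Fin (d i)) (Fin (d i)) ℂ) :
    tensorTrace ρ N = (ρ * tensor N).trace :=
  rfl

lemma isHermitian_tensor {N : ∀ i, Matrix (Fin (d i)) (Fin (d i)) ℂ}
    (hN : ∀ i, (N i).IsHermitian) : (tensor N).IsHermitian := by
  ext x y
  simp only [tensor, Matrix.conjTranspose_apply, Matrix.of_apply, star_prod]
  exact Finset.prod_congr rfl fun i _ => (hN i).apply (x i) (y i)

lemma tensor_update_apply (N : ∀ i, Matrix (Fin (d i)) (Fin (d i)) ℂ) (i : Fin n)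
    (A : Matrix (Fin (d i)) (Fin (d i)) ℂ) (x y : ∀ i, Fin (d i)) :
    tensor (Function.update N i A) x y
      = A (x i) (y i) * ∏ j ∈ Finset.univ.erase i, N j (x j) (y j) := by
  have hentry : (fun j => Function.update N i A j (x j) (y j))
      = Function.update (fun j => N j (x j) (y j)) i (A (x i) (y i)) :=
    funext <| Function.apply_update
      (fun j (B : Matrix (Fin (d j)) (Fin (d j)) ℂ) => B (x j) (y j)) N i A
  rw [tensor, Matrix.of_apply, hentry, Finset.prod_update_of_mem (Finset.mem_univ i),
    Finset.sdiff_singleton_eq_erase]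

lemma tensor_update_sum (N : ∀ i, Matrix (Fin (d i)) (Fin (d i)) ℂ) (i : Fin n)
    {κ : Type*} (s : Finset κ) (X : κ → Matrix (Fin (d i)) (Fin (d i)) ℂ) :
    tensor (Function.update N i (∑ c ∈ s, X c))
      = ∑ c ∈ s, tensor (Function.update N i (X c)) := by
  ext x y
  simp only [tensor_update_apply, Matrix.sum_apply, Finset.sum_mul]

lemma tensorTrace_update_sum (ρ : Matrix (∀ i, Fin (d i)) (∀ i, Fin (d i)) ℂ)
    (N : ∀ i, Matrix (Fin (d i)) (Fin (d i)) ℂ) (i : Fin n)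
    {κ : Type*} (s : Finset κ) (X : κ → Matrix (Fin (d i)) (Fin (d i)) ℂ) :
    tensorTrace ρ (Function.update N i (∑ c ∈ s, X c))
      = ∑ c ∈ s, tensorTrace ρ (Function.update N i (X c)) := by
  simp only [tensorTrace_eq_trace, tensor_update_sum, Matrix.mul_sum, Matrix.trace_sum]

lemma ofReal_re_tensorTrace {ρ : Matrix (∀ i, Fin (d i)) (∀ i, Fin (d i)) ℂ}
    {N : ∀ i, Matrix (Fin (d i)) (Fin (d i)) ℂ} (hρ : ρ.IsHermitian)
    (hN : ∀ i, (N i).IsHermitian) : ((tensorTrace ρ N).re : ℂ) = tensorTrace ρ N := by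
  rw [← Complex.conj_eq_iff_re, tensorTrace_eq_trace]
  change star _ = _
  rw [← Matrix.trace_conjTranspose, Matrix.conjTranspose_mul, (isHermitian_tensor hN).eq,
    hρ.eq, Matrix.trace_mul_comm]

theorem sum_payoff_update_eq {T A : Type*} [Fintype A] [DecidableEq A]
    (ρ : Matrix (∀ i, Fin (d i)) (∀ i, Fin (d i)) ℂ)
    (M : ∀ i, T → A → Matrix (Fin (d i)) (Fin (d i)) ℂ) (u : (Fin n → A) → ℝ)
    (t : Fin n → T) (i : Fin n) (r : T) (μ : A → A) :
    ∑ a, u (Function.update a i (μ (a i))) *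
        (tensorTrace ρ fun j => M j (Function.update t i r j) (a j)).re
      = ∑ a, u a * (tensorTrace ρ (Function.update (fun j => M j (t j) (a j)) i
          (∑ c with μ c = a i, M i r c))).re := by
  have hdeviate : ∀ a c, Function.update (fun j => M j (t j) (a j)) i (M i r c)
      = fun j => M j (Function.update t i r j) (Function.update a i c j) := fun a c =>
    funext fun j => (Function.apply_update₂ M t a i r c j).symm
  simp only [tensorTrace_update_sum, Complex.re_sum, hdeviate]
  exact (sum_mul_sum_fiber_update i μ u _).symm

end TensorTrace

/-- If `(M, ρ)` is a quantum equilibrium for the `n`-player binary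
game `G`, then the induced distribution `P(a|t) = tr[ρ ⨂ᵢ M i (tᵢ) (aᵢ)]` is a
quantum correlation and its canonical solution `(id_T, id_A, P)` is a Nash
equilibrium for `G`; consequently `Q(G) ⊆ Q_corr(G)`. -/
theorem quantum_equilibrium_mem_Qcorr (G : Game n) (d : Fin n → ℕ)
    (ρ : Matrix (∀ i, Fin (d i)) (∀ i, Fin (d i)) ℂ)
    (M : ∀ i, Bool → Bool → Matrix (Fin (d i)) (Fin (d i)) ℂ)
    (hρ : ρ.PosSemidef) (hρtr : ρ.trace = 1)
    (hMpsd : ∀ i t a, (M i t a).PosSemidef) (hMsum : ∀ i t, ∑ a, M i t a = 1)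
    -- `(M, ρ)` is a quantum equilibrium: no player can improve their expected
    -- payoff by replacing, for any of their types, their POVM by another POVM `N`.
    (hQeq : ∀ (i : Fin n) (ti : Bool) (N : Bool → Matrix (Fin (d i)) (Fin (d i)) ℂ),
      (∀ a, (N a).PosSemidef) → (∑ a, N a = 1) →
      (∑ tm : ∀ _ : {j : Fin n // j ≠ i}, Bool, ∑ a : Fin n → Bool,
        G.payoff i a (mergeB i ti tm) *
          (tensorTrace ρ fun j => M j (mergeB i ti tm j) (a j)).re *
          G.prior (mergeB i ti tm))
      ≥ ∑ tm : ∀ _ : {j : Fin n // j ≠ i}, Bool, ∑ a : Fin n → Bool,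
        G.payoff i a (mergeB i ti tm) *
          (tensorTrace ρ
            (Function.update (fun j => M j (mergeB i ti tm j) (a j)) i (N (a i)))).re *
          G.prior (mergeB i ti tm)) :
    IsQuantumCorrelation
      (fun a t : Fin n → Bool => (tensorTrace ρ fun j => M j (t j) (a j)).re) ∧
    CanonicalNashEq G
      (fun a t : Fin n → Bool => (tensorTrace ρ fun j => M j (t j) (a j)).re) := by
  refine ⟨⟨d, ρ, M, hρ, hρtr, hMpsd, hMsum, fun a t =>
    ofReal_re_tensorTrace hρ.1 fun j => (hMpsd j (t j) (a j)).1⟩, ?_⟩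
  intro i ti ri μ
  have hNpsd : ∀ b, (∑ c with μ ti c = b, M i ri c).PosSemidef := fun b =>
    Matrix.posSemidef_sum _ fun c _ => hMpsd i ri c
  have hNsum : ∑ b, ∑ c with μ ti c = b, M i ri c = 1 := by
    rw [Finset.sum_fiberwise, hMsum]
  refine (Eq.le ?_).trans (hQeq i ti _ hNpsd hNsum)
  refine Finset.sum_congr rfl fun tm _ => ?_
  simp only [← Finset.sum_mul]
  rw [← update_mergeB_self i ti ri tm,
    sum_payoff_update_eq ρ M (fun a => G.payoff i a (mergeB i ti tm))]

end

end QG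
end

section
/- (Proposition 'closed'.) Let G be an n-player binary game and let (f, g, π, C) be a Nash equilibrium for G whose correlation C is a quantum correlation. Then the induced distribution P(a|t) = Σ_{λ, s} C(s | f(t,λ)) π(λ) [g(t,s,λ) = a] is itself a quantum correlation, and the canonical solution (id_T, id_A, P) is a Nash equilibrium for G. In particular, every element of Q_corr(G) is a quantum correlation whose canonical solution is a 𝒞_Q-Nash equilibrium. -/
open scoped BigOperators ComplexOrder

namespace QG

noncomputable section

variable {n : ℕ}

/-! ### Auxiliary material -/

section Aux

open Matrix Kronecker

lemma posSemidef_kronecker {m p : Type*} [Fintype m] [Fintype p]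
    {A : Matrix m m ℂ} {B : Matrix p p ℂ} (hA : A.PosSemidef) (hB : B.PosSemidef) :
    (A ⊗ₖ B).PosSemidef := by
  exact hA.kronecker hB

lemma posSemidef_sum {ι m : Type*} [Fintype m] (s : Finset ι)
    (f : ι → Matrix m m ℂ) (h : ∀ i ∈ s, (f i).PosSemidef) :
    (∑ i ∈ s, f i).PosSemidef :=
  Finset.sum_induction f Matrix.PosSemidef (fun _ _ ha hb => ha.add hb)
    Matrix.PosSemidef.zero h

lemma sum_kronecker_left {ι m p : Type*} (s : Finset ι)
    (A : ι → Matrix m m ℂ) (B : Matrix p p ℂ) :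
    ((∑ i ∈ s, A i) ⊗ₖ B) = ∑ i ∈ s, (A i ⊗ₖ B) := by
  ext ⟨x, y⟩ ⟨x', y'⟩
  simp [Matrix.sum_apply, Finset.sum_mul]

lemma kronecker_sum_right {ι m p : Type*} (s : Finset ι)
    (A : Matrix m m ℂ) (B : ι → Matrix p p ℂ) :
    (A ⊗ₖ (∑ i ∈ s, B i)) = ∑ i ∈ s, (A ⊗ₖ B i) := by
  ext ⟨x, y⟩ ⟨x', y'⟩
  simp [Matrix.sum_apply, Finset.mul_sum]

lemma tensorTrace_eq_sum {d : Fin n → ℕ}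
    (ρ : Matrix (∀ i, Fin (d i)) (∀ i, Fin (d i)) ℂ)
    (N : ∀ i, Matrix (Fin (d i)) (Fin (d i)) ℂ) :
    tensorTrace ρ N = ∑ x, ∑ y, ρ x y * ∏ i, N i (y i) (x i) := by
  simp [tensorTrace, Matrix.trace, Matrix.diag, Matrix.mul_apply]

/-- splitting a product over a pi type into two pi factors -/
def piProdEquiv {A B : Fin n → Type*} : ((∀ i, A i) × (∀ i, B i)) ≃ ∀ i, A i × B i where
  toFun p i := (p.1 i, p.2 i)
  invFun f := (fun i => (f i).1, fun i => (f i).2)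
  left_inv _ := rfl
  right_inv _ := rfl

/-- reindexing the per-player pair space to a `Fin`. -/
def eΛ (sol : Solution n) (d : Fin n → ℕ) (i : Fin n) :
    (Fin (d i) × sol.Λ i) ≃ Fin (d i * Fintype.card (sol.Λ i)) :=
  ((Equiv.refl (Fin (d i))).prodCongr (Fintype.equivFin (sol.Λ i))).trans finProdFinEquiv

/-- the global reindexing equivalence -/
def eBig (sol : Solution n) (d : Fin n → ℕ) :
    ((∀ i, Fin (d i)) × (∀ i, sol.Λ i)) ≃ ∀ i, Fin (d i * Fintype.card (sol.Λ i)) :=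
  piProdEquiv.trans (Equiv.piCongrRight (eΛ sol d))

open Classical in
/-- the enlarged state: `ρ` tensored with the diagonal distribution of the `λ`s. -/
def rhoBig (sol : Solution n) {d : Fin n → ℕ}
    (ρ : Matrix (∀ i, Fin (d i)) (∀ i, Fin (d i)) ℂ) :
    Matrix (∀ i, Fin (d i * Fintype.card (sol.Λ i)))
      (∀ i, Fin (d i * Fintype.card (sol.Λ i))) ℂ :=
  (ρ ⊗ₖ (Matrix.diagonal fun v : ∀ i, sol.Λ i => ∏ i, (sol.pdist i (v i) : ℂ))).submatrix
    (eBig sol d).symm (eBig sol d).symm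

open Classical in
/-- the enlarged POVM elements, before reindexing. -/
def QMat (sol : Solution n) {d : Fin n → ℕ}
    (M : ∀ i, sol.R i → sol.S i → Matrix (Fin (d i)) (Fin (d i)) ℂ)
    (i : Fin n) (t a : Bool) :
    Matrix (Fin (d i) × sol.Λ i) (Fin (d i) × sol.Λ i) ℂ :=
  ∑ x : sol.Λ i, ∑ si : sol.S i,
    ((M i (sol.f i t x) si) ⊗ₖ
      (Matrix.diagonal fun l => if l = x ∧ sol.g i t si x = a then 1 else 0))

/-- the enlarged POVM elements. -/
def MBig (sol : Solution n) {d : Fin n → ℕ}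
    (M : ∀ i, sol.R i → sol.S i → Matrix (Fin (d i)) (Fin (d i)) ℂ)
    (i : Fin n) (t a : Bool) :
    Matrix (Fin (d i * Fintype.card (sol.Λ i))) (Fin (d i * Fintype.card (sol.Λ i))) ℂ :=
  (QMat sol M i t a).submatrix (eΛ sol d i).symm (eΛ sol d i).symm

open Classical in
lemma QMat_apply (sol : Solution n) {d : Fin n → ℕ}
    (M : ∀ i, sol.R i → sol.S i → Matrix (Fin (d i)) (Fin (d i)) ℂ)
    (i : Fin n) (t a : Bool) (u u' : Fin (d i)) (v v' : sol.Λ i) :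
    QMat sol M i t a (u, v) (u', v') =
      if v = v' then
        ∑ si, (if sol.g i t si v = a then M i (sol.f i t v) si u u' else 0)
      else 0 := by
  classical
  unfold QMat
  simp only [Matrix.sum_apply, Matrix.kroneckerMap_apply, Matrix.diagonal_apply]
  by_cases hvv : v = v'
  · subst hvv
    simp only [if_pos rfl]
    rw [Finset.sum_comm]
    refine Finset.sum_congr rfl fun si _ => ?_
    rw [Finset.sum_eq_single v]
    · by_cases hg : sol.g i t si v = a <;> simp [hg]
    · intro b _ hb
      simp [Ne.symm hb]
    · simp
  · simp [hvv]

lemma sum_prod_pi {κ : Fin n → Type*} [∀ i, Fintype (κ i)] (f : ∀ i, κ i → ℂ) :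
    ∑ v : ∀ i, κ i, ∏ i, f i (v i) = ∏ i, ∑ x, f i x := by
  classical
  calc ∑ v : ∀ i, κ i, ∏ i, f i (v i)
      = ∑ v ∈ Fintype.piFinset (fun _ => Finset.univ), ∏ i, f i (v i) :=
        Finset.sum_congr (Fintype.piFinset_univ).symm fun _ _ => rfl
    _ = ∏ i, ∑ x, f i x := (Finset.prod_univ_sum _ _).symm

lemma eBig_symm_component (sol : Solution n) (d : Fin n → ℕ)
    (q : (∀ i, Fin (d i)) × (∀ i, sol.Λ i)) (i : Fin n) :
    (eΛ sol d i).symm ((eBig sol d) q i) = (q.1 i, q.2 i) :=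
  Equiv.symm_apply_apply (eΛ sol d i) (q.1 i, q.2 i)

open Classical in
lemma rhoBig_posSemidef (sol : Solution n) {d : Fin n → ℕ}
    {ρ : Matrix (∀ i, Fin (d i)) (∀ i, Fin (d i)) ℂ} (hρ : ρ.PosSemidef) :
    (rhoBig sol ρ).PosSemidef := by
  refine Matrix.PosSemidef.submatrix (posSemidef_kronecker hρ ?_) _
  refine Matrix.PosSemidef.diagonal fun v => ?_
  show (0 : ℂ) ≤ ∏ i, (sol.pdist i (v i) : ℂ)
  have h : (∏ i, (sol.pdist i (v i) : ℂ)) = ((∏ i, sol.pdist i (v i) : ℝ) : ℂ) := by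
    push_cast; rfl
  rw [h]
  rw [Complex.zero_le_real]
  exact Finset.prod_nonneg fun i _ => sol.pdist_nonneg i (v i)

open Classical in
lemma rhoBig_trace (sol : Solution n) {d : Fin n → ℕ}
    {ρ : Matrix (∀ i, Fin (d i)) (∀ i, Fin (d i)) ℂ} (h : ρ.trace = 1) :
    (rhoBig sol ρ).trace = 1 := by
  have h1 : (rhoBig sol ρ).trace
      = (ρ ⊗ₖ (Matrix.diagonal fun v : ∀ i, sol.Λ i =>
          ∏ i, (sol.pdist i (v i) : ℂ))).trace := by
    rw [Matrix.trace, Matrix.trace]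
    refine (Fintype.sum_equiv (eBig sol d) _ _ fun p => ?_).symm
    simp [rhoBig, Matrix.diag, Matrix.submatrix_apply]
  rw [h1, Matrix.trace_kronecker, h, one_mul, Matrix.trace_diagonal,
    sum_prod_pi fun i l => (sol.pdist i l : ℂ)]
  refine Finset.prod_eq_one fun i _ => ?_
  exact_mod_cast sol.pdist_sum_one i

open Classical in
lemma QMat_posSemidef (sol : Solution n) {d : Fin n → ℕ}
    {M : ∀ i, sol.R i → sol.S i → Matrix (Fin (d i)) (Fin (d i)) ℂ}
    (hM : ∀ i r s, (M i r s).PosSemidef) (i : Fin n) (t a : Bool) :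
    (QMat sol M i t a).PosSemidef := by
  refine posSemidef_sum _ _ fun x _ => posSemidef_sum _ _ fun si _ => ?_
  refine posSemidef_kronecker (hM _ _ _) (Matrix.PosSemidef.diagonal fun l => ?_)
  dsimp only
  split_ifs
  · exact zero_le_one
  · exact le_refl 0

lemma MBig_posSemidef (sol : Solution n) {d : Fin n → ℕ}
    {M : ∀ i, sol.R i → sol.S i → Matrix (Fin (d i)) (Fin (d i)) ℂ}
    (hM : ∀ i r s, (M i r s).PosSemidef) (i : Fin n) (t a : Bool) :
    (MBig sol M i t a).PosSemidef :=
  Matrix.PosSemidef.submatrix (QMat_posSemidef sol hM i t a) _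

open Classical in
lemma QMat_sum (sol : Solution n) {d : Fin n → ℕ}
    (M : ∀ i, sol.R i → sol.S i → Matrix (Fin (d i)) (Fin (d i)) ℂ)
    (i : Fin n) (t : Bool) (hM : ∀ r, ∑ si, M i r si = 1) :
    ∑ a : Bool, QMat sol M i t a = 1 := by
  have step : ∑ a : Bool, QMat sol M i t a
      = ∑ x : sol.Λ i, ((1 : Matrix (Fin (d i)) (Fin (d i)) ℂ) ⊗ₖ
          Matrix.diagonal fun l => if l = x then (1 : ℂ) else 0) := by
    unfold QMat
    rw [Finset.sum_comm]
    refine Finset.sum_congr rfl fun x _ => ?_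
    rw [Finset.sum_comm]
    have hs : ∀ si : sol.S i,
        ∑ a : Bool, ((M i (sol.f i t x) si) ⊗ₖ
            (Matrix.diagonal fun l => if l = x ∧ sol.g i t si x = a then 1 else 0))
          = ((M i (sol.f i t x) si) ⊗ₖ
            (Matrix.diagonal fun l => if l = x then (1 : ℂ) else 0)) := by
      intro si
      have hdd : (∑ a : Bool, (Matrix.diagonal
            fun l => if l = x ∧ sol.g i t si x = a then (1 : ℂ) else 0))
          = (Matrix.diagonal fun l : sol.Λ i => if l = x then (1 : ℂ) else 0) := by
        ext l l'
        by_cases hl : l = l'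
        · subst hl
          simp only [Matrix.sum_apply, Matrix.diagonal_apply_eq]
          by_cases hx : l = x
          · subst hx
            cases hg : sol.g i t si l <;> simp [hg]
          · simp [hx]
        · simp [Matrix.sum_apply, Matrix.diagonal, hl]
      rw [← hdd]
      exact (kronecker_sum_right _ _ _).symm
    rw [Finset.sum_congr rfl fun si _ => hs si, ← sum_kronecker_left, hM]
  rw [step, ← kronecker_sum_right]
  have hd : (∑ x : sol.Λ i, Matrix.diagonal fun l => if l = x then (1 : ℂ) else 0)
      = (1 : Matrix (sol.Λ i) (sol.Λ i) ℂ) := by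
    ext l l'
    by_cases hl : l = l'
    · subst hl
      simp [Matrix.sum_apply, Finset.sum_ite_eq, Matrix.one_apply]
    · simp [Matrix.sum_apply, Matrix.diagonal, hl, Matrix.one_apply]
  rw [hd, Matrix.one_kronecker_one]

open Classical in
lemma MBig_sum (sol : Solution n) {d : Fin n → ℕ}
    (M : ∀ i, sol.R i → sol.S i → Matrix (Fin (d i)) (Fin (d i)) ℂ)
    (i : Fin n) (t : Bool) (hM : ∀ r, ∑ si, M i r si = 1) :
    ∑ a : Bool, MBig sol M i t a = 1 := by
  unfold MBig
  have h : ∑ a : Bool, (QMat sol M i t a).submatrix (eΛ sol d i).symm (eΛ sol d i).symm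
      = (∑ a : Bool, QMat sol M i t a).submatrix (eΛ sol d i).symm (eΛ sol d i).symm := by
    ext x y
    simp [Matrix.sum_apply, Matrix.submatrix_apply]
  rw [h, QMat_sum sol M i t hM, Matrix.submatrix_one_equiv]

open Classical in
lemma induced_eq (sol : Solution n) {d : Fin n → ℕ}
    (ρ : Matrix (∀ i, Fin (d i)) (∀ i, Fin (d i)) ℂ)
    (M : ∀ i, sol.R i → sol.S i → Matrix (Fin (d i)) (Fin (d i)) ℂ)
    (hCtr : ∀ (s : ∀ i, sol.S i) (r : ∀ i, sol.R i),
      (sol.C s r : ℂ) = tensorTrace ρ fun i => M i (r i) (s i))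
    (a t : Fin n → Bool) :
    ((sol.induced a t : ℝ) : ℂ)
      = tensorTrace (rhoBig sol ρ) fun i => MBig sol M i (t i) (a i) := by
  have hL : ((sol.induced a t : ℝ) : ℂ)
      = ∑ v : ∀ j, sol.Λ j, ∑ s : ∀ j, sol.S j, ∑ u : ∀ j, Fin (d j), ∑ u' : ∀ j, Fin (d j),
          ρ u u' * (∏ i, M i (sol.f i (t i) (v i)) (s i) (u' i) (u i))
            * (∏ i, (sol.pdist i (v i) : ℂ))
            * (if (fun i => sol.g i (t i) (s i) (v i)) = a then 1 else 0) := by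
    unfold Solution.induced
    push_cast
    refine Finset.sum_congr rfl fun v _ => Finset.sum_congr rfl fun s _ => ?_
    have hc : (sol.C s (fun i => sol.f i (t i) (v i)) : ℂ)
        = ∑ u : ∀ j, Fin (d j), ∑ u' : ∀ j, Fin (d j),
            ρ u u' * ∏ i, M i (sol.f i (t i) (v i)) (s i) (u' i) (u i) := by
      rw [hCtr s fun i => sol.f i (t i) (v i), tensorTrace_eq_sum]
    rw [hc]
    simp only [Finset.sum_mul]
    refine Finset.sum_congr rfl fun u _ => Finset.sum_congr rfl fun u' _ => ?_
    by_cases hg : (fun i => sol.g i (t i) (s i) (v i)) = a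
    · simp only [if_pos hg]
      push_cast
      ring
    · simp only [if_neg hg]
      push_cast
      ring
  rw [hL, tensorTrace_eq_sum]
  refine Eq.symm ?_
  calc
    ∑ x, ∑ y, rhoBig sol ρ x y * ∏ i, MBig sol M i (t i) (a i) (y i) (x i)
      = ∑ p : (∀ i, Fin (d i)) × (∀ i, sol.Λ i),
          ∑ q : (∀ i, Fin (d i)) × (∀ i, sol.Λ i),
          ρ p.1 q.1 * (if p.2 = q.2 then ∏ i, (sol.pdist i (p.2 i) : ℂ) else 0)
            * ∏ i, QMat sol M i (t i) (a i) (q.1 i, q.2 i) (p.1 i, p.2 i) := by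
        rw [← Equiv.sum_comp (eBig sol d)
          (fun x => ∑ y, rhoBig sol ρ x y * ∏ i, MBig sol M i (t i) (a i) (y i) (x i))]
        refine Finset.sum_congr rfl fun p _ => ?_
        rw [← Equiv.sum_comp (eBig sol d)
          (fun y => rhoBig sol ρ (eBig sol d p) y
            * ∏ i, MBig sol M i (t i) (a i) (y i) (eBig sol d p i))]
        refine Finset.sum_congr rfl fun q _ => ?_
        have h1 : rhoBig sol ρ (eBig sol d p) (eBig sol d q)
            = ρ p.1 q.1 * (if p.2 = q.2 then ∏ i, (sol.pdist i (p.2 i) : ℂ) else 0) := by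
          simp [rhoBig, Matrix.submatrix_apply, Matrix.diagonal_apply]
        have h2 : ∀ i, MBig sol M i (t i) (a i) (eBig sol d q i) (eBig sol d p i)
            = QMat sol M i (t i) (a i) (q.1 i, q.2 i) (p.1 i, p.2 i) := fun i => by
          show (QMat sol M i (t i) (a i)).submatrix _ _ _ _ = _
          rw [Matrix.submatrix_apply, eBig_symm_component, eBig_symm_component]
        rw [h1, Finset.prod_congr rfl fun i _ => h2 i]
    _ = ∑ p : (∀ i, Fin (d i)) × (∀ i, sol.Λ i), ∑ u' : ∀ i, Fin (d i),
          ρ p.1 u' * (∏ i, (sol.pdist i (p.2 i) : ℂ))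
            * ∏ i, (∑ si, if sol.g i (t i) si (p.2 i) = a i
                then M i (sol.f i (t i) (p.2 i)) si (u' i) (p.1 i) else 0) := by
        refine Finset.sum_congr rfl fun p _ => ?_
        rw [Fintype.sum_prod_type]
        refine Finset.sum_congr rfl fun u' _ => ?_
        rw [Finset.sum_eq_single p.2]
        · rw [if_pos rfl]
          congr 1
          refine Finset.prod_congr rfl fun i _ => ?_
          rw [QMat_apply, if_pos rfl]
        · intro v' _ hv'
          rw [if_neg (Ne.symm hv')]
          ring
        · intro h
          exact absurd (Finset.mem_univ _) h
    _ = ∑ p : (∀ i, Fin (d i)) × (∀ i, sol.Λ i), ∑ u' : ∀ i, Fin (d i),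
          ρ p.1 u' * (∏ i, (sol.pdist i (p.2 i) : ℂ))
            * ∑ s : ∀ j, sol.S j, ∏ i, (if sol.g i (t i) (s i) (p.2 i) = a i
                then M i (sol.f i (t i) (p.2 i)) (s i) (u' i) (p.1 i) else 0) := by
        refine Finset.sum_congr rfl fun p _ => Finset.sum_congr rfl fun u' _ => ?_
        congr 1
        rw [← sum_prod_pi fun i si => if sol.g i (t i) si (p.2 i) = a i
          then M i (sol.f i (t i) (p.2 i)) si (u' i) (p.1 i) else 0]
    _ = ∑ v : ∀ j, sol.Λ j, ∑ s : ∀ j, sol.S j, ∑ u : ∀ j, Fin (d j), ∑ u' : ∀ j, Fin (d j),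
          ρ u u' * (∏ i, M i (sol.f i (t i) (v i)) (s i) (u' i) (u i))
            * (∏ i, (sol.pdist i (v i) : ℂ))
            * (if (fun i => sol.g i (t i) (s i) (v i)) = a then 1 else 0) := by
        rw [Fintype.sum_prod_type]
        rw [Finset.sum_comm]
        refine Finset.sum_congr rfl fun v _ => ?_
        calc
          ∑ u : ∀ j, Fin (d j), ∑ u' : ∀ j, Fin (d j),
              ρ u u' * (∏ i, (sol.pdist i (v i) : ℂ))
                * ∑ s : ∀ j, sol.S j, ∏ i, (if sol.g i (t i) (s i) (v i) = a i
                    then M i (sol.f i (t i) (v i)) (s i) (u' i) (u i) else 0)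
            = ∑ u : ∀ j, Fin (d j), ∑ u' : ∀ j, Fin (d j), ∑ s : ∀ j, sol.S j,
                ρ u u' * (∏ i, (sol.pdist i (v i) : ℂ))
                  * ∏ i, (if sol.g i (t i) (s i) (v i) = a i
                      then M i (sol.f i (t i) (v i)) (s i) (u' i) (u i) else 0) := by
              refine Finset.sum_congr rfl fun u _ => Finset.sum_congr rfl fun u' _ => ?_
              rw [Finset.mul_sum]
          _ = ∑ u : ∀ j, Fin (d j), ∑ s : ∀ j, sol.S j, ∑ u' : ∀ j, Fin (d j),
                ρ u u' * (∏ i, (sol.pdist i (v i) : ℂ))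
                  * ∏ i, (if sol.g i (t i) (s i) (v i) = a i
                      then M i (sol.f i (t i) (v i)) (s i) (u' i) (u i) else 0) :=
              Finset.sum_congr rfl fun u _ => Finset.sum_comm
          _ = ∑ s : ∀ j, sol.S j, ∑ u : ∀ j, Fin (d j), ∑ u' : ∀ j, Fin (d j),
                ρ u u' * (∏ i, (sol.pdist i (v i) : ℂ))
                  * ∏ i, (if sol.g i (t i) (s i) (v i) = a i
                      then M i (sol.f i (t i) (v i)) (s i) (u' i) (u i) else 0) :=
              Finset.sum_comm
          _ = ∑ s : ∀ j, sol.S j, ∑ u : ∀ j, Fin (d j), ∑ u' : ∀ j, Fin (d j),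
                ρ u u' * (∏ i, M i (sol.f i (t i) (v i)) (s i) (u' i) (u i))
                  * (∏ i, (sol.pdist i (v i) : ℂ))
                  * (if (fun i => sol.g i (t i) (s i) (v i)) = a then 1 else 0) := by
              refine Finset.sum_congr rfl fun s _ => Finset.sum_congr rfl fun u _ =>
                Finset.sum_congr rfl fun u' _ => ?_
              rw [Fintype.prod_ite_zero]
              by_cases hg : ∀ i, sol.g i (t i) (s i) (v i) = a i
              · rw [if_pos hg, if_pos (funext hg)]
                ring
              · rw [if_neg hg, if_neg fun hh => hg fun i => congrFun hh i]
                ring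

lemma merge_same {α : Fin n → Type*} (i : Fin n) (x : α i)
    (y : ∀ j : {j : Fin n // j ≠ i}, α j.1) : merge i x y i = x := by
  unfold merge
  rw [dif_pos rfl]
  exact cast_eq _ x

lemma merge_ne {α : Fin n → Type*} (i : Fin n) (x : α i)
    (y : ∀ j : {j : Fin n // j ≠ i}, α j.1) (j : Fin n) (h : j ≠ i) :
    merge i x y j = y ⟨j, h⟩ := by
  unfold merge
  rw [dif_neg h]

lemma mergeB_same (i : Fin n) (x : Bool) (y : ∀ _ : {j : Fin n // j ≠ i}, Bool) :
    mergeB i x y i = x := merge_same (α := fun _ => Bool) i x y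

lemma mergeB_ne (i : Fin n) (x : Bool) (y : ∀ _ : {j : Fin n // j ≠ i}, Bool)
    (j : Fin n) (h : j ≠ i) : mergeB i x y j = y ⟨j, h⟩ :=
  merge_ne (α := fun _ => Bool) i x y j h

lemma prod_pdist_update {Λ : Fin n → Type*} [∀ i, Fintype (Λ i)] (p : ∀ i, Λ i → ℝ)
    (i : Fin n) (l : ∀ j, Λ j) (a : Λ i) :
    p i (l i) * ∏ j, p j (Function.update l i a j) = p i a * ∏ j, p j (l j) := by
  classical
  have h : (fun j => p j (Function.update l i a j))
      = Function.update (fun j => p j (l j)) i (p i a) := by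
    ext j
    rcases eq_or_ne j i with rfl | hj
    · simp
    · simp [Function.update_of_ne hj]
  rw [h, Finset.prod_update_of_mem (Finset.mem_univ i)]
  rw [← Finset.mul_prod_erase Finset.univ (fun j => p j (l j)) (Finset.mem_univ i),
    Finset.erase_eq]
  ring

/-- The self-inverse equivalence swapping the spare `i`-th coordinate with the
`i`-th coordinate of the tuple. -/
def updateEquiv {Λ : Fin n → Type*} (i : Fin n) :
    (Λ i × (∀ j, Λ j)) ≃ (Λ i × (∀ j, Λ j)) where
  toFun q := (q.2 i, Function.update q.2 i q.1)
  invFun q := (q.2 i, Function.update q.2 i q.1)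
  left_inv q := by simp [Function.update_idem]
  right_inv q := by simp [Function.update_idem]

lemma sum_pdist_split {Λ : Fin n → Type*} [∀ i, Fintype (Λ i)] (p : ∀ i, Λ i → ℝ)
    (hp : ∀ i, ∑ l, p i l = 1) (i : Fin n) (F : Λ i → (∀ j, Λ j) → ℝ)
    (hF : ∀ a b (l : ∀ j, Λ j), F a (Function.update l i b) = F a l) :
    ∑ l : ∀ j, Λ j, F (l i) l * ∏ j, p j (l j)
      = ∑ a : Λ i, p i a * ∑ l : ∀ j, Λ j, F a l * ∏ j, p j (l j) := by
  classical
  have h1 : ∑ a : Λ i, p i a * ∑ l : ∀ j, Λ j, F a l * ∏ j, p j (l j)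
      = ∑ q : Λ i × (∀ j, Λ j), p i q.1 * (F q.1 q.2 * ∏ j, p j (q.2 j)) := by
    rw [Fintype.sum_prod_type]
    simp [Finset.mul_sum]
  have h2 : ∑ l : ∀ j, Λ j, F (l i) l * ∏ j, p j (l j)
      = ∑ q : Λ i × (∀ j, Λ j), p i q.1 * (F (q.2 i) q.2 * ∏ j, p j (q.2 j)) := by
    rw [Fintype.sum_prod_type]
    simp only [← Finset.mul_sum]
    rw [← Finset.sum_mul, hp i, one_mul]
  rw [h1, h2]
  refine Fintype.sum_equiv (updateEquiv (Λ := Λ) i) _ _ ?_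
  rintro ⟨a, l⟩
  show p i a * (F (l i) l * ∏ j, p j (l j))
      = p i (l i)
        * (F (l i) (Function.update l i a) * ∏ j, p j (Function.update l i a j))
  rw [hF]
  have h3 := prod_pdist_update p i l a
  calc p i a * (F (l i) l * ∏ j, p j (l j))
      = F (l i) l * (p i a * ∏ j, p j (l j)) := by ring
    _ = F (l i) l * (p i (l i) * ∏ j, p j (Function.update l i a j)) := by rw [← h3]
    _ = p i (l i) * (F (l i) l * ∏ j, p j (Function.update l i a j)) := by ring

lemma sum_induced_mul (sol : Solution n) (T' : Fin n → Bool)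
    (h : (Fin n → Bool) → (Fin n → Bool)) (u : (Fin n → Bool) → ℝ) (c : ℝ) :
    ∑ a : Fin n → Bool, u (h a) * sol.induced a T' * c
      = ∑ l : ∀ j, sol.Λ j, ∑ s : ∀ j, sol.S j,
          u (h fun j => sol.g j (T' j) (s j) (l j))
            * sol.C s (fun j => sol.f j (T' j) (l j)) * c * ∏ j, sol.pdist j (l j) := by
  classical
  unfold Solution.induced
  simp only [Finset.sum_mul, Finset.mul_sum]
  rw [Finset.sum_comm]
  refine Finset.sum_congr rfl fun l _ => ?_
  rw [Finset.sum_comm]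
  refine Finset.sum_congr rfl fun s _ => ?_
  rw [Finset.sum_eq_single (fun j => sol.g j (T' j) (s j) (l j))]
  · rw [if_pos rfl]
    ring
  · intro b _ hb
    rw [if_neg (Ne.symm hb)]
    ring
  · intro hmem
    exact absurd (Finset.mem_univ _) hmem

end Aux

/-- If `(f, g, π, C)` is a Nash equilibrium for `G` whose
correlation `C` is a quantum correlation, then the induced distribution `P`
is itself a quantum correlation and the canonical solution `(id_T, id_A, P)`
is a Nash equilibrium for `G`. In particular every element of `Q_corr(G)` is a
quantum correlation whose canonical solution is a `𝒞_Q`-Nash equilibrium. -/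
theorem qcorr_induced_is_quantum_and_canonical_nash (G : Game n) (sol : Solution n)
    (hC : IsQuantumCorrelation sol.C) (hNash : sol.IsNashEq G) :
    IsQuantumCorrelation sol.induced ∧ CanonicalNashEq G sol.induced := by
  classical
  obtain ⟨d, ρ, M, hρPSD, hρtr, hMPSD, hMsum, hCtr⟩ := hC
  constructor
  · exact ⟨fun i => d i * Fintype.card (sol.Λ i), rhoBig sol ρ,
      (fun i t a => MBig sol M i t a),
      rhoBig_posSemidef sol hρPSD, rhoBig_trace sol hρtr,
      (fun i t a => MBig_posSemidef sol hMPSD i t a),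
      (fun i t => MBig_sum sol M i t (hMsum i)),
      (fun s r => induced_eq sol ρ M hCtr s r)⟩
  · intro i ti ri μ
    have hLHS : (∑ tm : ∀ _ : {j : Fin n // j ≠ i}, Bool, ∑ a : Fin n → Bool,
        G.payoff i a (mergeB i ti tm) * sol.induced a (mergeB i ti tm)
          * G.prior (mergeB i ti tm))
        = ∑ tm : ∀ _ : {j : Fin n // j ≠ i}, Bool, ∑ l : ∀ j, sol.Λ j, ∑ s : ∀ j, sol.S j,
            G.payoff i (fun j => sol.g j (mergeB i ti tm j) (s j) (l j)) (mergeB i ti tm) *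
              sol.C s (fun j => sol.f j (mergeB i ti tm j) (l j)) *
              G.prior (mergeB i ti tm) * ∏ j, sol.pdist j (l j) :=
      Finset.sum_congr rfl fun tm _ =>
        sum_induced_mul sol (mergeB i ti tm) (fun a => a)
          (fun a => G.payoff i a (mergeB i ti tm)) (G.prior (mergeB i ti tm))
    have key1 : ∀ (tm : ∀ _ : {j : Fin n // j ≠ i}, Bool) (l : ∀ j, sol.Λ j)
        (s : ∀ j, sol.S j),
        Function.update (fun j => sol.g j (mergeB i ri tm j) (s j) (l j)) i
            (μ ti (sol.g i (mergeB i ri tm i) (s i) (l i)))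
          = mergeB i (μ ti (sol.g i ri (s i) (l i)))
              (fun j => sol.g j.1 (tm j) (s j.1) (l j.1)) := by
      intro tm l s
      funext j
      rcases eq_or_ne j i with rfl | hj
      · simp only [Function.update_self, mergeB_same]
      · rw [Function.update_of_ne hj, mergeB_ne i _ _ j hj, mergeB_ne i _ _ j hj]
    have key2 : ∀ (tm : ∀ _ : {j : Fin n // j ≠ i}, Bool) (l : ∀ j, sol.Λ j),
        (fun j => sol.f j (mergeB i ri tm j) (l j))
          = merge i (sol.f i ri (l i)) (fun j => sol.f j.1 (tm j) (l j.1)) := by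
      intro tm l
      funext j
      rcases eq_or_ne j i with rfl | hj
      · rw [mergeB_same, merge_same]
      · rw [mergeB_ne i _ _ j hj, merge_ne i _ _ j hj]
    have hRHS : (∑ tm : ∀ _ : {j : Fin n // j ≠ i}, Bool, ∑ a : Fin n → Bool,
        G.payoff i (Function.update a i (μ ti (a i))) (mergeB i ti tm) *
          sol.induced a (mergeB i ri tm) * G.prior (mergeB i ti tm))
        = ∑ b : sol.Λ i, sol.pdist i b *
            ∑ tm : ∀ _ : {j : Fin n // j ≠ i}, Bool, ∑ l : ∀ j, sol.Λ j, ∑ s : ∀ j, sol.S j,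
              G.payoff i (mergeB i (μ ti (sol.g i ri (s i) b))
                  fun j => sol.g j.1 (tm j) (s j.1) (l j.1)) (mergeB i ti tm) *
                sol.C s (merge i (sol.f i ri b) fun j => sol.f j.1 (tm j) (l j.1)) *
                G.prior (mergeB i ti tm) * ∏ j, sol.pdist j (l j) := by
      calc
        (∑ tm : ∀ _ : {j : Fin n // j ≠ i}, Bool, ∑ a : Fin n → Bool,
            G.payoff i (Function.update a i (μ ti (a i))) (mergeB i ti tm) *
              sol.induced a (mergeB i ri tm) * G.prior (mergeB i ti tm))
          = ∑ tm : ∀ _ : {j : Fin n // j ≠ i}, Bool, ∑ l : ∀ j, sol.Λ j, ∑ s : ∀ j, sol.S j,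
              G.payoff i (mergeB i (μ ti (sol.g i ri (s i) (l i)))
                  fun j => sol.g j.1 (tm j) (s j.1) (l j.1)) (mergeB i ti tm) *
                sol.C s (merge i (sol.f i ri (l i)) fun j => sol.f j.1 (tm j) (l j.1)) *
                G.prior (mergeB i ti tm) * ∏ j, sol.pdist j (l j) := by
            refine Finset.sum_congr rfl fun tm _ => ?_
            rw [sum_induced_mul sol (mergeB i ri tm)
              (fun a => Function.update a i (μ ti (a i)))
              (fun a => G.payoff i a (mergeB i ti tm)) (G.prior (mergeB i ti tm))]
            refine Finset.sum_congr rfl fun l _ => Finset.sum_congr rfl fun s _ => ?_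
            rw [key1 tm l s, key2 tm l]
        _ = ∑ tm : ∀ _ : {j : Fin n // j ≠ i}, Bool, ∑ l : ∀ j, sol.Λ j,
              (∑ s : ∀ j, sol.S j,
                G.payoff i (mergeB i (μ ti (sol.g i ri (s i) (l i)))
                    fun j => sol.g j.1 (tm j) (s j.1) (l j.1)) (mergeB i ti tm) *
                  sol.C s (merge i (sol.f i ri (l i)) fun j => sol.f j.1 (tm j) (l j.1)) *
                  G.prior (mergeB i ti tm)) * ∏ j, sol.pdist j (l j) := by
            refine Finset.sum_congr rfl fun tm _ => Finset.sum_congr rfl fun l _ => ?_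
            rw [← Finset.sum_mul]
        _ = ∑ tm : ∀ _ : {j : Fin n // j ≠ i}, Bool, ∑ b : sol.Λ i, sol.pdist i b *
              ∑ l : ∀ j, sol.Λ j,
              (∑ s : ∀ j, sol.S j,
                G.payoff i (mergeB i (μ ti (sol.g i ri (s i) b))
                    fun j => sol.g j.1 (tm j) (s j.1) (l j.1)) (mergeB i ti tm) *
                  sol.C s (merge i (sol.f i ri b) fun j => sol.f j.1 (tm j) (l j.1)) *
                  G.prior (mergeB i ti tm)) * ∏ j, sol.pdist j (l j) := by
            refine Finset.sum_congr rfl fun tm _ => ?_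
            refine sum_pdist_split sol.pdist sol.pdist_sum_one i
              (fun b l => ∑ s : ∀ j, sol.S j,
                G.payoff i (mergeB i (μ ti (sol.g i ri (s i) b))
                    fun j => sol.g j.1 (tm j) (s j.1) (l j.1)) (mergeB i ti tm) *
                  sol.C s (merge i (sol.f i ri b) fun j => sol.f j.1 (tm j) (l j.1)) *
                  G.prior (mergeB i ti tm)) ?_
            intro x b l
            refine Finset.sum_congr rfl fun s _ => ?_
            have hg2 : (fun j : {j : Fin n // j ≠ i} =>
                sol.g j.1 (tm j) (s j.1) (Function.update l i b j.1))
                = fun j => sol.g j.1 (tm j) (s j.1) (l j.1) :=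
              funext fun j => by rw [Function.update_of_ne j.2]
            have hf2 : (fun j : {j : Fin n // j ≠ i} =>
                sol.f j.1 (tm j) (Function.update l i b j.1))
                = fun j => sol.f j.1 (tm j) (l j.1) :=
              funext fun j => by rw [Function.update_of_ne j.2]
            rw [hg2, hf2]
        _ = ∑ tm : ∀ _ : {j : Fin n // j ≠ i}, Bool, ∑ b : sol.Λ i, sol.pdist i b *
              ∑ l : ∀ j, sol.Λ j, ∑ s : ∀ j, sol.S j,
                G.payoff i (mergeB i (μ ti (sol.g i ri (s i) b))
                    fun j => sol.g j.1 (tm j) (s j.1) (l j.1)) (mergeB i ti tm) *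
                  sol.C s (merge i (sol.f i ri b) fun j => sol.f j.1 (tm j) (l j.1)) *
                  G.prior (mergeB i ti tm) * ∏ j, sol.pdist j (l j) := by
            refine Finset.sum_congr rfl fun tm _ => Finset.sum_congr rfl fun b _ => ?_
            congr 1
            refine Finset.sum_congr rfl fun l _ => ?_
            rw [Finset.sum_mul]
        _ = ∑ b : sol.Λ i, sol.pdist i b *
              ∑ tm : ∀ _ : {j : Fin n // j ≠ i}, Bool, ∑ l : ∀ j, sol.Λ j, ∑ s : ∀ j, sol.S j,
                G.payoff i (mergeB i (μ ti (sol.g i ri (s i) b))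
                    fun j => sol.g j.1 (tm j) (s j.1) (l j.1)) (mergeB i ti tm) *
                  sol.C s (merge i (sol.f i ri b) fun j => sol.f j.1 (tm j) (l j.1)) *
                  G.prior (mergeB i ti tm) * ∏ j, sol.pdist j (l j) := by
            rw [Finset.sum_comm]
            refine Finset.sum_congr rfl fun b _ => ?_
            rw [← Finset.mul_sum]
    rw [ge_iff_le, hRHS, hLHS]
    have hb : ∀ b : sol.Λ i,
        (∑ tm : ∀ _ : {j : Fin n // j ≠ i}, Bool, ∑ l : ∀ j, sol.Λ j, ∑ s : ∀ j, sol.S j,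
            G.payoff i (mergeB i (μ ti (sol.g i ri (s i) b))
                fun j => sol.g j.1 (tm j) (s j.1) (l j.1)) (mergeB i ti tm) *
              sol.C s (merge i (sol.f i ri b) fun j => sol.f j.1 (tm j) (l j.1)) *
              G.prior (mergeB i ti tm) * ∏ j, sol.pdist j (l j))
          ≤ ∑ tm : ∀ _ : {j : Fin n // j ≠ i}, Bool, ∑ l : ∀ j, sol.Λ j, ∑ s : ∀ j, sol.S j,
              G.payoff i (fun j => sol.g j (mergeB i ti tm j) (s j) (l j)) (mergeB i ti tm) *
                sol.C s (fun j => sol.f j (mergeB i ti tm j) (l j)) *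
                G.prior (mergeB i ti tm) * ∏ j, sol.pdist j (l j) :=
      fun b => hNash i ti (sol.f i ri b) (fun c si => μ c (sol.g i ri si b))
    calc
      ∑ b : sol.Λ i, sol.pdist i b *
          ∑ tm : ∀ _ : {j : Fin n // j ≠ i}, Bool, ∑ l : ∀ j, sol.Λ j, ∑ s : ∀ j, sol.S j,
            G.payoff i (mergeB i (μ ti (sol.g i ri (s i) b))
                fun j => sol.g j.1 (tm j) (s j.1) (l j.1)) (mergeB i ti tm) *
              sol.C s (merge i (sol.f i ri b) fun j => sol.f j.1 (tm j) (l j.1)) *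
              G.prior (mergeB i ti tm) * ∏ j, sol.pdist j (l j)
        ≤ ∑ b : sol.Λ i, sol.pdist i b *
            ∑ tm : ∀ _ : {j : Fin n // j ≠ i}, Bool, ∑ l : ∀ j, sol.Λ j, ∑ s : ∀ j, sol.S j,
              G.payoff i (fun j => sol.g j (mergeB i ti tm j) (s j) (l j)) (mergeB i ti tm) *
                sol.C s (fun j => sol.f j (mergeB i ti tm j) (l j)) *
                G.prior (mergeB i ti tm) * ∏ j, sol.pdist j (l j) :=
          Finset.sum_le_sum fun b _ =>
            mul_le_mul_of_nonneg_left (hb b) (sol.pdist_nonneg i b)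
      _ = ∑ tm : ∀ _ : {j : Fin n // j ≠ i}, Bool, ∑ l : ∀ j, sol.Λ j, ∑ s : ∀ j, sol.S j,
            G.payoff i (fun j => sol.g j (mergeB i ti tm j) (s j) (l j)) (mergeB i ti tm) *
              sol.C s (fun j => sol.f j (mergeB i ti tm j) (l j)) *
              G.prior (mergeB i ti tm) * ∏ j, sol.pdist j (l j) := by
          rw [← Finset.sum_mul, sol.pdist_sum_one i, one_mul]

end

end QG
end

section
/- Non-signalling correlations are closed under local classical pre- and post-processing: if C is a non-signalling correlation over inputs ∏_i R_i and outputs ∏_i S_i, and each player i uses a mixed local processing given by a probability distribution π_i on a finite set Λ_i and functions f_i : T_i × Λ_i → R_i, g_i : T_i × S_i × Λ_i → A_i, then the induced distribution P(a|t) = Σ_{λ, s} C(s | f(t,λ)) π(λ) [g(t,s,λ) = a] (with π(λ) = ∏_i π_i(λ_i) and f, g acting componentwise) is a non-signalling correlation over inputs ∏_i T_i and outputs ∏_i A_i. -/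
open scoped BigOperators

namespace QG

noncomputable section

variable {n : ℕ}

/-- A non-signalling (belief invariant) correlation: for any set `I` of players,
fixing the outputs on `I` and summing over the outputs of the complement `J`,
the result does not depend on the inputs of the players in `J`. -/
def IsNonSignalling {R S : Fin n → Type*} [∀ i, Fintype (S i)] [∀ i, DecidableEq (S i)]
    (C : (∀ i, S i) → (∀ i, R i) → ℝ) : Prop :=
  ∀ (I : Finset (Fin n)) (s₀ : ∀ i, S i) (r r' : ∀ i, R i),
    (∀ i ∈ I, r i = r' i) →
    (∑ s : ∀ i, S i, if ∀ i ∈ I, s i = s₀ i then C s r else 0) =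
      ∑ s : ∀ i, S i, if ∀ i ∈ I, s i = s₀ i then C s r' else 0

/-!
Non-signalling is a family of linear conditions, so it survives averaging over the local
randomness `λ`, and it suffices to treat deterministic processing. Deterministic pre-processing
only relabels the inputs. For post-processing, the marginal of the new outputs on a set `I` of
players is the expectation under `C` of an indicator that only depends on the original outputs
of the players in `I` (and on their inputs), and such expectations are determined by the
marginals of `C` on `I`.
-/

open Finset

variable {R S : Fin n → Type*} [∀ i, Fintype (S i)] [∀ i, DecidableEq (S i)]

theorem IsNonSignalling.preprocess {T : Fin n → Type*} {C : (∀ i, S i) → (∀ i, R i) → ℝ}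
    (hC : IsNonSignalling C) (f : ∀ i, T i → R i) :
    IsNonSignalling fun s (t : ∀ i, T i) => C s fun i => f i (t i) :=
  fun I s₀ t t' ht => hC I s₀ _ _ fun i hi => by rw [ht i hi]

theorem IsNonSignalling.sum_mul {L : Type*} [Fintype L] {C : L → (∀ i, S i) → (∀ i, R i) → ℝ}
    (hC : ∀ l, IsNonSignalling (C l)) (w : L → ℝ) :
    IsNonSignalling fun s r => ∑ l, w l * C l s r := by
  intro I s₀ r r' hr
  have hswap : ∀ q : ∀ i, R i,
      ∑ s, (if ∀ i ∈ I, s i = s₀ i then ∑ l, w l * C l s q else 0)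
        = ∑ l, w l * ∑ s, if ∀ i ∈ I, s i = s₀ i then C l s q else 0 := by
    intro q
    simp only [← sum_filter, mul_sum]
    exact sum_comm
  rw [hswap, hswap]
  exact sum_congr rfl fun l _ => by rw [hC l I s₀ r r' hr]

theorem IsNonSignalling.sum_filter_restrict_eq {C : (∀ i, S i) → (∀ i, R i) → ℝ}
    (hC : IsNonSignalling C) {I : Finset (Fin n)} {r r' : ∀ i, R i} (hr : ∀ i ∈ I, r i = r' i)
    (u : ∀ i : I, S i) :
    ∑ s with I.restrict s = u, C s r = ∑ s with I.restrict s = u, C s r' := by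
  by_cases hu : ∃ s₀, I.restrict s₀ = u
  · obtain ⟨s₀, rfl⟩ := hu
    have hfiber : ∀ s : ∀ i, S i, I.restrict s = I.restrict s₀ ↔ ∀ i ∈ I, s i = s₀ i := by
      simp [funext_iff, Finset.restrict]
    simp only [sum_filter, hfiber]
    exact hC I s₀ r r' hr
  · simp [not_exists.mp hu]

theorem IsNonSignalling.sum_comp_restrict_mul_eq {C : (∀ i, S i) → (∀ i, R i) → ℝ}
    (hC : IsNonSignalling C) {I : Finset (Fin n)} {r r' : ∀ i, R i} (hr : ∀ i ∈ I, r i = r' i)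
    (φ : (∀ i : I, S i) → ℝ) :
    ∑ s, φ (I.restrict s) * C s r = ∑ s, φ (I.restrict s) * C s r' := by
  have hfiberwise : ∀ q : ∀ i, R i,
      ∑ s, φ (I.restrict s) * C s q = ∑ u, φ u * ∑ s with I.restrict s = u, C s q := by
    intro q
    rw [← sum_fiberwise univ I.restrict]
    refine sum_congr rfl fun u _ => ?_
    rw [mul_sum]
    exact sum_congr rfl fun s hs => by rw [(mem_filter.mp hs).2]
  rw [hfiberwise, hfiberwise]
  exact sum_congr rfl fun u _ => by rw [hC.sum_filter_restrict_eq hr u]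

theorem IsNonSignalling.postprocess {A : Fin n → Type*} [∀ i, Fintype (A i)]
    [∀ i, DecidableEq (A i)] {C : (∀ i, S i) → (∀ i, R i) → ℝ} (hC : IsNonSignalling C)
    (g : ∀ i, R i → S i → A i) :
    IsNonSignalling fun (a : ∀ i, A i) r =>
      ∑ s, if (fun i => g i (r i) (s i)) = a then C s r else 0 := by
  intro I a₀ r r' hr
  dsimp only
  have hmarginal : ∀ q : ∀ i, R i,
      ∑ a : ∀ i, A i, (if ∀ i ∈ I, a i = a₀ i then
          ∑ s, if (fun i => g i (q i) (s i)) = a then C s q else 0 else 0)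
        = ∑ s, (if ∀ i ∈ I, g i (q i) (s i) = a₀ i then 1 else 0) * C s q := by
    intro q
    rw [← sum_filter, sum_comm]
    refine sum_congr rfl fun s _ => ?_
    rw [sum_ite_eq, boole_mul]
    simp
  have hinputs : ∀ s : ∀ i, S i,
      (∀ i ∈ I, g i (r i) (s i) = a₀ i) ↔ ∀ i ∈ I, g i (r' i) (s i) = a₀ i :=
    fun s => forall₂_congr fun i hi => by rw [hr i hi]
  rw [hmarginal, hmarginal]
  simp only [hinputs]
  exact hC.sum_comp_restrict_mul_eq hr
    fun u => if ∀ i (hi : i ∈ I), g i (r' i) (u ⟨i, hi⟩) = a₀ i then 1 else 0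

theorem nonsignalling_closed_under_local_processing_general
    (T A R S Λ : Fin n → Type)
    [∀ i, Fintype (A i)] [∀ i, DecidableEq (A i)]
    [∀ i, Fintype (S i)] [∀ i, DecidableEq (S i)]
    [∀ i, Fintype (Λ i)]
    (C : (∀ i, S i) → (∀ i, R i) → ℝ)
    (hNS : IsNonSignalling C)
    (p : ∀ i, Λ i → ℝ)
    (f : ∀ i, T i → Λ i → R i) (g : ∀ i, T i → S i → Λ i → A i)
    (P : (∀ i, A i) → (∀ i, T i) → ℝ)
    (hP : ∀ a t, P a t =
      ∑ l : ∀ i, Λ i, ∑ s : ∀ i, S i,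
        C s (fun i => f i (t i) (l i)) * (∏ i, p i (l i)) *
          (if (fun i => g i (t i) (s i) (l i)) = a then 1 else 0)) :
    IsNonSignalling P := by
  have hmixture : P = fun a t => ∑ l : ∀ i, Λ i, (∏ i, p i (l i)) *
      ∑ s, if (fun i => g i (t i) (s i) (l i)) = a then C s (fun i => f i (t i) (l i)) else 0 := by
    funext a t
    rw [hP]
    refine sum_congr rfl fun l _ => ?_
    rw [mul_sum]
    refine sum_congr rfl fun s _ => ?_
    split_ifs <;> ring
  have hlocal : ∀ l : ∀ i, Λ i, IsNonSignalling fun (a : ∀ i, A i) t =>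
      ∑ s, if (fun i => g i (t i) (s i) (l i)) = a then C s (fun i => f i (t i) (l i)) else 0 :=
    fun l => (hNS.preprocess fun i t => f i t (l i)).postprocess fun i t s => g i t s (l i)
  rw [hmixture]
  exact IsNonSignalling.sum_mul hlocal _

/-- Non-signalling correlations are closed under local classical
pre- and post-processing: if `C` is a non-signalling correlation over inputs
`∀ i, R i` and outputs `∀ i, S i`, and each player `i` processes locally via a
distribution `p i` on `Λ i` and functions `f i : T i → Λ i → R i`,
`g i : T i → S i → Λ i → A i`, then the induced distribution
`P(a|t) = Σ_{λ,s} C(s|f(t,λ)) π(λ) [g(t,s,λ) = a]` is a non-signalling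
correlation over inputs `∀ i, T i` and outputs `∀ i, A i`. -/
theorem nonsignalling_closed_under_local_processing
    (T A R S Λ : Fin n → Type)
    [∀ i, Fintype (T i)] [∀ i, Fintype (A i)] [∀ i, DecidableEq (A i)]
    [∀ i, Fintype (R i)] [∀ i, Fintype (S i)] [∀ i, DecidableEq (S i)]
    [∀ i, Fintype (Λ i)]
    (C : (∀ i, S i) → (∀ i, R i) → ℝ)
    (hC0 : ∀ s r, 0 ≤ C s r) (hC1 : ∀ r, ∑ s, C s r = 1)
    (hNS : IsNonSignalling C)
    (p : ∀ i, Λ i → ℝ) (hp0 : ∀ i l, 0 ≤ p i l) (hp1 : ∀ i, ∑ l, p i l = 1)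
    (f : ∀ i, T i → Λ i → R i) (g : ∀ i, T i → S i → Λ i → A i)
    (P : (∀ i, A i) → (∀ i, T i) → ℝ)
    (hP : ∀ a t, P a t =
      ∑ l : ∀ i, Λ i, ∑ s : ∀ i, S i,
        C s (fun i => f i (t i) (l i)) * (∏ i, p i (l i)) *
          (if (fun i => g i (t i) (s i) (l i)) = a then 1 else 0)) :
    IsNonSignalling P :=
  nonsignalling_closed_under_local_processing_general T A R S Λ C hNS p f g P hP

end

end QG
end

section
/- If (f, g, π, C) is a Nash equilibrium for an n-player binary game G, then its canonical solution (id_T, id_A, P), where P is the distribution induced by (f, g, π, C), is also a Nash equilibrium for G. -/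
open scoped BigOperators ComplexOrder

namespace QG

noncomputable section

variable {n : ℕ}

/-! A deviation in the canonical solution (report `rᵢ`, answer `μ(tᵢ, aᵢ)`) is simulated in the
original solution, separately for each private value `λᵢ`: send `fᵢ(rᵢ, λᵢ)` to the mediator
and answer `μ(tᵢ, gᵢ(rᵢ, sᵢ, λᵢ))`. Since `λ` has product distribution and the simulated
deviation no longer reads the `i`-th coordinate of `λ`, averaging these deviation payoffs over
`λᵢ ∼ πᵢ` gives exactly the canonical deviation payoff; each is unprofitable by the Nash
condition, and the honest payoffs of the two solutions coincide. -/

open Finset Function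

section Merge

variable {α : Fin n → Type*} (i : Fin n) (x : α i) (y : ∀ j : {j : Fin n // j ≠ i}, α j.1)

@[simp]
lemma merge_self : merge i x y i = x := by
  simp [merge]

lemma merge_of_ne {j : Fin n} (h : j ≠ i) : merge i x y j = y ⟨j, h⟩ := by
  simp [merge, h]

@[simp]
lemma mergeB_self (b : Bool) (t : ∀ _ : {j : Fin n // j ≠ i}, Bool) : mergeB i b t i = b :=
  merge_self (α := fun _ => Bool) i b t

@[simp]
lemma update_merge (x' : α i) : update (merge i x y) i x' = merge i x' y := by
  ext j
  rcases eq_or_ne j i with rfl | h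
  · simp
  · simp [h, merge_of_ne]

lemma apply_mergeB {β : Fin n → Type*} (F : ∀ j, Bool → β j) (b : Bool)
    (t : ∀ _ : {j : Fin n // j ≠ i}, Bool) :
    (fun j => F j (mergeB i b t j)) = merge i (F i b) fun j => F j.1 (t j) := by
  ext j
  rcases eq_or_ne j i with rfl | h
  · simp [mergeB]
  · simp [mergeB, h, merge_of_ne]

end Merge

lemma prod_update_mul {Λ : Fin n → Type*} (p : ∀ j, Λ j → ℝ) (i : Fin n)
    (l : ∀ j, Λ j) (x : Λ i) :
    p i (l i) * ∏ j, p j (update l i x j) = p i x * ∏ j, p j (l j) := by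
  simp only [apply_update (fun j => p j), prod_update_of_mem (mem_univ i)]
  rw [← mul_prod_erase univ _ (mem_univ i), sdiff_singleton_eq_erase]
  ring

lemma sum_diag_mul_prod {Λ : Fin n → Type*} [∀ j, Fintype (Λ j)] (p : ∀ j, Λ j → ℝ)
    (i : Fin n) (hp : ∑ x, p i x = 1) (B : Λ i → (∀ j, Λ j) → ℝ)
    (hB : ∀ x l y, B x (update l i y) = B x l) :
    ∑ l, B (l i) l * ∏ j, p j (l j) = ∑ x, p i x * ∑ l, B x l * ∏ j, p j (l j) := by
  let e : Equiv.Perm (Λ i × ∀ j, Λ j) :=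
    Involutive.toPerm (fun xl => (xl.2 i, update xl.2 i xl.1)) fun xl => by simp
  calc ∑ l, B (l i) l * ∏ j, p j (l j)
      = ∑ xl : Λ i × ∀ j, Λ j, p i xl.1 * (B (xl.2 i) xl.2 * ∏ j, p j (xl.2 j)) := by
        simp [Fintype.sum_prod_type, ← sum_mul, hp, sum_comm (γ := Λ i)]
    _ = ∑ xl : Λ i × ∀ j, Λ j, p i xl.1 * (B xl.1 xl.2 * ∏ j, p j (xl.2 j)) := by
        refine Fintype.sum_equiv e _ _ fun ⟨x, l⟩ => ?_
        change _ = p i (l i) * (B (l i) (update l i x) * ∏ j, p j (update l i x j))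
        rw [hB]
        linear_combination -B (l i) l * prod_update_mul p i l x
    _ = ∑ x, p i x * ∑ l, B x l * ∏ j, p j (l j) := by
        simp [Fintype.sum_prod_type, mul_sum]

def canonicalPayoff (G : Game n) (P : (Fin n → Bool) → (Fin n → Bool) → ℝ) (i : Fin n)
    (ti : Bool) : ℝ :=
  ∑ tm : ∀ _ : {j : Fin n // j ≠ i}, Bool, ∑ a : Fin n → Bool,
    G.payoff i a (mergeB i ti tm) * P a (mergeB i ti tm) * G.prior (mergeB i ti tm)

def canonicalDeviationPayoff (G : Game n) (P : (Fin n → Bool) → (Fin n → Bool) → ℝ)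
    (i : Fin n) (ti ri : Bool) (μ : Bool → Bool → Bool) : ℝ :=
  ∑ tm : ∀ _ : {j : Fin n // j ≠ i}, Bool, ∑ a : Fin n → Bool,
    G.payoff i (update a i (μ ti (a i))) (mergeB i ti tm) *
      P a (mergeB i ri tm) * G.prior (mergeB i ti tm)

lemma canonicalNashEq_iff (G : Game n) (P : (Fin n → Bool) → (Fin n → Bool) → ℝ) :
    CanonicalNashEq G P ↔ ∀ i ti ri μ,
      canonicalDeviationPayoff G P i ti ri μ ≤ canonicalPayoff G P i ti :=
  Iff.rfl

namespace Solution

variable (sol : Solution n) (G : Game n) (i : Fin n)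

def payoff (ti : Bool) : ℝ :=
  ∑ tm : ∀ _ : {j : Fin n // j ≠ i}, Bool, ∑ l : ∀ j, sol.Λ j, ∑ s : ∀ j, sol.S j,
    G.payoff i (fun j => sol.g j (mergeB i ti tm j) (s j) (l j)) (mergeB i ti tm) *
      sol.C s (fun j => sol.f j (mergeB i ti tm j) (l j)) *
      G.prior (mergeB i ti tm) * ∏ j, sol.pdist j (l j)

def deviationPayoff (ti : Bool) (ri : sol.R i) (μ : Bool → sol.S i → Bool) : ℝ :=
  ∑ tm : ∀ _ : {j : Fin n // j ≠ i}, Bool, ∑ l : ∀ j, sol.Λ j, ∑ s : ∀ j, sol.S j,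
    G.payoff i (mergeB i (μ ti (s i)) fun j => sol.g j.1 (tm j) (s j.1) (l j.1))
        (mergeB i ti tm) *
      sol.C s (merge i ri fun j => sol.f j.1 (tm j) (l j.1)) *
      G.prior (mergeB i ti tm) * ∏ j, sol.pdist j (l j)

lemma isNashEq_iff : sol.IsNashEq G ↔
    ∀ i ti ri μ, sol.deviationPayoff G i ti ri μ ≤ sol.payoff G i ti :=
  Iff.rfl

lemma sum_mul_induced (t : Fin n → Bool) (F : (Fin n → Bool) → ℝ) :
    ∑ a, F a * sol.induced a t =
      ∑ l : ∀ j, sol.Λ j, ∑ s : ∀ j, sol.S j, F (fun j => sol.g j (t j) (s j) (l j)) *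
        sol.C s (fun j => sol.f j (t j) (l j)) * ∏ j, sol.pdist j (l j) := by
  simp only [induced, mul_sum, mul_ite, mul_one, mul_zero]
  rw [sum_comm]
  refine sum_congr rfl fun l _ => ?_
  rw [sum_comm]
  simp [mul_assoc]

lemma canonicalPayoff_induced (ti : Bool) :
    canonicalPayoff G sol.induced i ti = sol.payoff G i ti := by
  refine sum_congr rfl fun tm _ => ?_
  rw [← sum_mul, sum_mul_induced]
  simp only [sum_mul]
  exact sum_congr rfl fun l _ => sum_congr rfl fun s _ => by ring

lemma canonicalDeviationPayoff_induced (ti ri : Bool) (μ : Bool → Bool → Bool) :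
    canonicalDeviationPayoff G sol.induced i ti ri μ =
      ∑ x, sol.pdist i x *
        sol.deviationPayoff G i ti (sol.f i ri x) fun t s => μ t (sol.g i ri s x) := by
  let D : sol.Λ i → (∀ j, sol.Λ j) → ℝ := fun x l =>
    ∑ tm : ∀ _ : {j : Fin n // j ≠ i}, Bool, ∑ s : ∀ j, sol.S j,
      G.payoff i (mergeB i (μ ti (sol.g i ri (s i) x)) fun j => sol.g j.1 (tm j) (s j.1) (l j.1))
          (mergeB i ti tm) *
        sol.C s (merge i (sol.f i ri x) fun j => sol.f j.1 (tm j) (l j.1)) *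
        G.prior (mergeB i ti tm)
  have hD : ∀ x l y, D x (update l i y) = D x l := by
    intro x l y
    have hl (j : {j : Fin n // j ≠ i}) : update l i y j = l j := update_of_ne j.2 y l
    simp only [D, hl]
  calc canonicalDeviationPayoff G sol.induced i ti ri μ
      = ∑ l, D (l i) l * ∏ j, sol.pdist j (l j) := by
        simp only [D, sum_mul]
        rw [sum_comm]
        refine sum_congr rfl fun tm _ => ?_
        rw [← sum_mul, sum_mul_induced]
        simp only [sum_mul]
        refine sum_congr rfl fun l _ => sum_congr rfl fun s _ => ?_
        have hg := apply_mergeB i (fun j b => sol.g j b (s j) (l j)) ri tm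
        have hf := apply_mergeB i (fun j b => sol.f j b (l j)) ri tm
        rw [hg, hf, update_merge, mergeB_self]
        unfold mergeB
        ring
    _ = ∑ x, sol.pdist i x * ∑ l, D x l * ∏ j, sol.pdist j (l j) :=
        sum_diag_mul_prod sol.pdist i (sol.pdist_sum_one i) D hD
    _ = _ := by
        simp only [D, deviationPayoff, sum_mul]
        exact sum_congr rfl fun x _ => congrArg _ sum_comm

end Solution

/-- If `(f, g, π, C)` is a Nash equilibrium for the `n`-player
binary game `G`, then its canonical solution `(id_T, id_A, P)`, where `P` is the
induced distribution, is also a Nash equilibrium for `G`. -/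
theorem canonical_of_nash (G : Game n) (sol : Solution n)
    (hNash : sol.IsNashEq G) : CanonicalNashEq G sol.induced := by
  rw [canonicalNashEq_iff]
  intro i ti ri μ
  rw [sol.canonicalPayoff_induced, sol.canonicalDeviationPayoff_induced]
  calc ∑ x, sol.pdist i x *
        sol.deviationPayoff G i ti (sol.f i ri x) (fun t s => μ t (sol.g i ri s x))
      ≤ ∑ x, sol.pdist i x * sol.payoff G i ti :=
        sum_le_sum fun x _ => mul_le_mul_of_nonneg_left
          ((sol.isNashEq_iff G).1 hNash i ti _ _) (sol.pdist_nonneg i x)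
    _ = sol.payoff G i ti := by rw [← sum_mul, sol.pdist_sum_one, one_mul]

end

end QG
end

section
/- The graph-state strategy for the NC(C3) games is pseudo-telepathic: letting |Φ⟩ = CZ^{(1,2)} CZ^{(2,3)} CZ^{(3,1)} |+⟩^{⊗3} and P(a|t) = |(⟨φ_{a_1|t_1}| ⊗ ⟨φ_{a_2|t_2}| ⊗ ⟨φ_{a_3|t_3}|) |Φ⟩|², where φ_{a|0} = |a⟩, φ_{0|1} = |+⟩, φ_{1|1} = |−⟩, the players win with probability 1: for every question t ∈ {100, 010, 001, 111} and every answer a ∈ {0,1}³ with (a,t) ∉ W, P(a|t) = 0; equivalently, for t ∈ {100, 010, 001}, P(a|t) > 0 implies a_1 ⊕ a_2 ⊕ a_3 = 0, and P(a|111) > 0 implies a_1 ⊕ a_2 ⊕ a_3 = 1. -/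
/-!
For each question `t`, the observable `O_t = ⊗ᵢ (X if tᵢ = 1 else Z)` stabilises the triangle
graph state up to a sign: `XZZ`, `ZXZ`, `ZZX` are its stabiliser generators and `XXX` is minus
their product. Each measurement vector `φ_{a|b}` is an eigenvector of its observable with
eigenvalue `(-1)^a`. Hence `⟨φ_a|Φ⟩ = ⟨φ_a|O_t|Φ⟩ = ±(-1)^{a₁+a₂+a₃} ⟨φ_a|Φ⟩`, which forces the
amplitude to vanish when `a` has the losing parity. In coordinates, `O_t` flips the bits asked `1`
and multiplies by signs, so the identity says that an involution of the summation index negates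
every term.
-/

open scoped BigOperators

namespace QG

noncomputable section

def q100 : Fin 3 → Bool := ![true, false, false]
def q010 : Fin 3 → Bool := ![false, true, false]
def q001 : Fin 3 → Bool := ![false, false, true]
def q111 : Fin 3 → Bool := ![true, true, true]

/-- The set of valid questions of the `NC(C₃)` games. -/
def validQuestions : Finset (Fin 3 → Bool) := {q100, q010, q001, q111}

/-- The parity `a₁ ⊕ a₂ ⊕ a₃` of an answer. -/
def parity (a : Fin 3 → Bool) : Bool := xor (a 0) (xor (a 1) (a 2))

/-- The winning condition of the `NC(C₃)` games: on questions `100, 010, 001`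
the answer must have even parity, on `111` it must have odd parity. -/
def NC3win (a t : Fin 3 → Bool) : Prop :=
  ((t = q100 ∨ t = q010 ∨ t = q001) ∧ parity a = false) ∨ (t = q111 ∧ parity a = true)

instance : ∀ a t, Decidable (NC3win a t) := fun a t => by unfold NC3win; infer_instance

/-- The controlled-Z phase `(−1)^{x₁x₂ + x₂x₃ + x₃x₁}` of the composite of the
three gates `CZ^{(1,2)} CZ^{(2,3)} CZ^{(3,1)}` on a computational basis state `x`. -/
def czPhase (x : Fin 3 → Fin 2) : ℂ :=
  (-1) ^ ((x 0).val * (x 1).val + (x 1).val * (x 2).val + (x 2).val * (x 0).val)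

/-- The state `|+⟩ = (|0⟩ + |1⟩)/√2`. -/
def ketPlus : Fin 2 → ℂ := ![((1 / Real.sqrt 2 : ℝ) : ℂ), ((1 / Real.sqrt 2 : ℝ) : ℂ)]

/-- The state `|−⟩ = (|0⟩ − |1⟩)/√2`. -/
def ketMinus : Fin 2 → ℂ := ![((1 / Real.sqrt 2 : ℝ) : ℂ), (-(1 / Real.sqrt 2 : ℝ) : ℂ)]

/-- The graph state `|Φ⟩ = CZ^{(1,2)} CZ^{(2,3)} CZ^{(3,1)} |+⟩^{⊗3}`, expressed
by its components in the computational basis. -/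
def graphState (x : Fin 3 → Fin 2) : ℂ := czPhase x * ∏ i, ketPlus (x i)

/-- The measurement vector for output `a` on type `t`: `|a⟩` for `t = 0`, and
`|+⟩` or `|−⟩` for `t = 1` according to whether `a = 0` or `a = 1`. -/
def measVec (a t : Bool) : Fin 2 → ℂ :=
  match t, a with
  | false, false => ![1, 0]
  | false, true => ![0, 1]
  | true, false => ketPlus
  | true, true => ketMinus

/-- The correlation of the graph-state strategy:
`P(a|t) = |(⟨φ_{a₁|t₁}| ⊗ ⟨φ_{a₂|t₂}| ⊗ ⟨φ_{a₃|t₃}|) |Φ⟩|²`. -/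
def Pgraph (a t : Fin 3 → Bool) : ℝ :=
  ‖∑ x : Fin 3 → Fin 2,
      (∏ i, (starRingEnd ℂ) (measVec (a i) (t i) (x i))) * graphState x‖ ^ 2

theorem sum_eq_zero_of_involutive_of_comp_eq_neg {ι M : Type*} [Fintype ι] [AddCommGroup M]
    [IsAddTorsionFree M] {f : ι → M} (g : ι → ι) (hg : Function.Involutive g)
    (hf : ∀ x, f (g x) = -f x) : ∑ x, f x = 0 :=
  self_eq_neg.mp <| by
    rw [← Finset.sum_neg_distrib, ← Equiv.sum_comp (hg.toPerm g) f]
    simp only [Function.Involutive.coe_toPerm, hf]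

/- In the computational basis, the observable `X` (if `b`) or `Z` (if `¬b`) sends `|y⟩` to
`pauliSign b y • |y'⟩`, where `y'` is `y` flipped if `b`; `flipAt t` does the flips on all qubits. -/
def flipAt {ι : Type*} (t : ι → Bool) (x : ι → Fin 2) : ι → Fin 2 :=
  fun i => if t i then (x i).rev else x i

theorem flipAt_involutive {ι : Type*} (t : ι → Bool) : Function.Involutive (flipAt t) := by
  intro x
  funext i
  by_cases h : t i <;> simp [flipAt, h]

def pauliSign (b : Bool) (y : Fin 2) : ℂ := if b then 1 else (-1) ^ (y : ℕ)

theorem pauliSign_eq_neg_one_pow (b : Bool) (y : Fin 2) :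
    pauliSign b y = (-1) ^ (if b then 0 else (y : ℕ)) := by
  cases b <;> simp [pauliSign]

theorem pauliSign_mul_self (b : Bool) (y : Fin 2) : pauliSign b y * pauliSign b y = 1 := by
  cases b <;> fin_cases y <;> simp [pauliSign]

theorem conj_measVec (a b : Bool) (y : Fin 2) : starRingEnd ℂ (measVec a b y) = measVec a b y := by
  cases a <;> cases b <;> fin_cases y <;> simp [measVec, ketPlus, ketMinus]

theorem measVec_flip_mul_pauliSign (a b : Bool) (y : Fin 2) :
    measVec a b (if b then y.rev else y) * pauliSign b y = (-1) ^ a.toNat * measVec a b y := by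
  cases a <;> cases b <;> fin_cases y <;> simp [measVec, ketPlus, ketMinus, pauliSign]

def edgeCount (x : Fin 3 → Fin 2) : ℕ :=
  (x 0).val * (x 1).val + (x 1).val * (x 2).val + (x 2).val * (x 0).val

theorem czPhase_flipAt_mul {t : Fin 3 → Bool} (ht : t ∈ validQuestions) (x : Fin 3 → Fin 2) :
    czPhase (flipAt t x) * ∏ i, pauliSign (t i) (x i) =
      (if t = q111 then -1 else 1) * czPhase x := by
  have key : ∀ x : Fin 3 → Fin 2, (edgeCount (flipAt t x) + ∑ i, if t i then 0 else (x i : ℕ)) % 2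
      = ((if t = q111 then 1 else 0) + edgeCount x) % 2 := by
    simp only [validQuestions, Finset.mem_insert, Finset.mem_singleton] at ht
    rcases ht with rfl | rfl | rfl | rfl <;> decide
  have hcz : ∀ x, czPhase x = (-1) ^ edgeCount x := fun _ => rfl
  simp only [hcz, pauliSign_eq_neg_one_pow, Finset.prod_pow_eq_pow_sum, ← pow_add]
  rw [neg_one_pow_eq_pow_mod_two, key, ← neg_one_pow_eq_pow_mod_two, pow_add]
  split_ifs <;> simp

theorem ketPlus_apply (y : Fin 2) : ketPlus y = ((1 / Real.sqrt 2 : ℝ) : ℂ) := by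
  fin_cases y <;> rfl

theorem graphState_eq_czPhase_mul (x : Fin 3 → Fin 2) :
    graphState x = czPhase x * ((1 / Real.sqrt 2 : ℝ) : ℂ) ^ 3 := by
  simp only [graphState, ketPlus_apply, Finset.prod_const, Finset.card_univ, Fintype.card_fin]

theorem graphState_flipAt_mul {t : Fin 3 → Bool} (ht : t ∈ validQuestions) (x : Fin 3 → Fin 2) :
    graphState (flipAt t x) * ∏ i, pauliSign (t i) (x i) =
      (if t = q111 then -1 else 1) * graphState x := by
  rw [graphState_eq_czPhase_mul, graphState_eq_czPhase_mul, mul_right_comm,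
    czPhase_flipAt_mul ht, mul_assoc]

def amplitude (a t : Fin 3 → Bool) : ℂ :=
  ∑ x : Fin 3 → Fin 2, (∏ i, measVec (a i) (t i) (x i)) * graphState x

theorem Pgraph_eq_norm_amplitude_sq (a t : Fin 3 → Bool) : Pgraph a t = ‖amplitude a t‖ ^ 2 := by
  simp only [Pgraph, amplitude, conj_measVec]

theorem prod_measVec_mul_graphState_flipAt {t : Fin 3 → Bool} (ht : t ∈ validQuestions)
    (a : Fin 3 → Bool) (x : Fin 3 → Fin 2) :
    (∏ i, measVec (a i) (t i) (flipAt t x i)) * graphState (flipAt t x) =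
      ((if t = q111 then -1 else 1) * ∏ i, (-1) ^ (a i).toNat) *
        ((∏ i, measVec (a i) (t i) (x i)) * graphState x) := by
  have hsq : (∏ i, pauliSign (t i) (x i)) * ∏ i, pauliSign (t i) (x i) = 1 := by
    simp [← Finset.prod_mul_distrib, pauliSign_mul_self]
  calc _ = (∏ i, measVec (a i) (t i) (flipAt t x i) * pauliSign (t i) (x i)) *
        (graphState (flipAt t x) * ∏ i, pauliSign (t i) (x i)) := by
          rw [Finset.prod_mul_distrib]
          linear_combination (-((∏ i, measVec (a i) (t i) (flipAt t x i)) *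
            graphState (flipAt t x))) * hsq
    _ = _ := by
      rw [graphState_flipAt_mul ht]
      simp only [flipAt, measVec_flip_mul_pauliSign, Finset.prod_mul_distrib]
      ring

theorem prod_neg_one_pow_toNat (a : Fin 3 → Bool) :
    ∏ i, (-1 : ℂ) ^ (a i).toNat = if parity a then -1 else 1 := by
  rw [Fin.prod_univ_three, parity]
  cases a 0 <;> cases a 1 <;> cases a 2 <;> norm_num

theorem sign_eq_neg_one_of_not_NC3win {a t : Fin 3 → Bool} (ht : t ∈ validQuestions)
    (h : ¬ NC3win a t) : (if t = q111 then -1 else 1) * ∏ i, (-1 : ℂ) ^ (a i).toNat = -1 := by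
  rw [prod_neg_one_pow_toNat]
  simp only [validQuestions, Finset.mem_insert, Finset.mem_singleton] at ht
  rcases ht with rfl | rfl | rfl | rfl <;> cases hp : parity a <;> simp_all [NC3win]

/-- The graph-state strategy for the `NC(C₃)` games is
pseudo-telepathic: for every valid question `t` and every answer `a` that does
not satisfy the winning condition, `P(a|t) = 0`; i.e., the players win with
probability `1`. -/
theorem graph_state_strategy_pseudotelepathic :
    ∀ t ∈ validQuestions, ∀ a : Fin 3 → Bool, ¬ NC3win a t → Pgraph a t = 0 := by
  intro t ht a hlose
  rw [Pgraph_eq_norm_amplitude_sq, amplitude,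
    sum_eq_zero_of_involutive_of_comp_eq_neg (flipAt t) (flipAt_involutive t), norm_zero]
  · norm_num
  intro x
  rw [prod_measVec_mul_graphState_flipAt ht, sign_eq_neg_one_of_not_NC3win ht hlose, neg_one_mul]

end

end QG
end

section
/- For the pseudo-telepathic correlation P of the NC(C3) graph-state strategy and any payoff parameters v_0, v_1 > 0, the social welfare equals (v_0 + v_1)/2: SW_G(P) = (1/3) Σ_{i=1}^3 Σ_{a,t} u_i(a,t) P(a|t) Π(t) = (v_0 + v_1)/2. -/
open scoped BigOperators

namespace QG

noncomputable section

/-- The social welfare of a distribution `P` for the game `G`: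
`SW_G(P) = (1/n) Σᵢ Σ_{a,t} uᵢ(a,t) P(a|t) Π(t)`. -/
def socialWelfare {n : ℕ} (G : Game n) (P : (Fin n → Bool) → (Fin n → Bool) → ℝ) : ℝ :=
  (1 / n : ℝ) * ∑ i : Fin n, ∑ a : Fin n → Bool, ∑ t : Fin n → Bool,
    G.payoff i a t * P a t * G.prior t

/-- The uniform prior on the four valid questions of `NC(C₃)`. -/
def NC3prior (t : Fin 3 → Bool) : ℝ := if t ∈ validQuestions then 1 / 4 else 0

/-- The `NC(C₃)` game with payoff parameters `v₀, v₁`. -/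
def NC3 (v0 v1 : ℝ) : Game 3 where
  valid := ↑validQuestions
  valid_nonempty := ⟨q100, by simp [validQuestions]⟩
  prior := NC3prior
  prior_nonneg := by intro t; unfold NC3prior; split <;> norm_num
  prior_sum_one := by
    unfold NC3prior
    rw [Finset.sum_ite_mem, Finset.univ_inter, Finset.sum_const]
    have h4 : validQuestions.card = 4 := by decide
    rw [h4]; norm_num
  prior_support := by
    intro t ht
    unfold NC3prior
    rw [if_neg]
    simpa using ht
  payoff := fun i a t => if NC3win a t then (if a i then v1 else v0) else 0

def g8 : Fin 8 → (Fin 3 → Fin 2) := ![![0,0,0], ![0,0,1], ![0,1,0], ![0,1,1], ![1,0,0], ![1,0,1], ![1,1,0], ![1,1,1]]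

lemma g8bij : Function.Bijective g8 := by decide

lemma sum_pi3 (f : (Fin 3 → Fin 2) → ℂ) :
    ∑ x, f x = f ![0,0,0] + f ![0,0,1] + f ![0,1,0] + f ![0,1,1] + f ![1,0,0] + f ![1,0,1] + f ![1,1,0] + f ![1,1,1] := by
  rw [← Fintype.sum_bijective g8 g8bij (f ∘ g8) f (fun _ => rfl)]
  simp [Fin.sum_univ_eight, g8]

set_option maxHeartbeats 4000000 in
lemma Pgraph_eq (a t : Fin 3 → Bool) (ht : t ∈ validQuestions) :
    Pgraph a t = if NC3win a t then 1/4 else 0 := by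
  have hs : Real.sqrt 2 ^ 2 = 2 := Real.sq_sqrt (by norm_num)
  have hs0 : Real.sqrt 2 ≠ 0 := by positivity
  have h8 : Real.sqrt 2 ^ 8 = 16 := by rw [show (8:ℕ) = 2 * 4 by norm_num, pow_mul, hs]; norm_num
  have h12 : Real.sqrt 2 ^ 12 = 64 := by rw [show (12:ℕ) = 2 * 6 by norm_num, pow_mul, hs]; norm_num
  have ha : a = ![a 0, a 1, a 2] := by funext i; fin_cases i <;> rfl
  rw [ha]
  fin_cases ht <;>
    cases h0 : a 0 <;> cases h1 : a 1 <;> cases h2 : a 2 <;>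
  · first
      | (rw [if_pos (by decide)]) | (rw [if_neg (by decide)])
    unfold Pgraph
    rw [sum_pi3]
    simp [graphState, czPhase, ketPlus, ketMinus, measVec, q100, q010, q001, q111, Fin.prod_univ_three]
    try norm_num [← Complex.ofReal_inv, ← Complex.ofReal_mul, ← Complex.ofReal_add, ← Complex.ofReal_neg, ← Complex.ofReal_sub, Complex.norm_real, Real.norm_eq_abs]
    try rw [sq_abs]
    try field_simp
    try nlinarith [hs, h8, h12]

def g8b : Fin 8 → (Fin 3 → Bool) := ![![false,false,false], ![false,false,true], ![false,true,false], ![false,true,true], ![true,false,false], ![true,false,true], ![true,true,false], ![true,true,true]]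

lemma g8bbij : Function.Bijective g8b := by decide

lemma sum_pi3b {M : Type} [AddCommMonoid M] (f : (Fin 3 → Bool) → M) :
    ∑ x, f x = f ![false,false,false] + f ![false,false,true] + f ![false,true,false] + f ![false,true,true] + f ![true,false,false] + f ![true,false,true] + f ![true,true,false] + f ![true,true,true] := by
  rw [← Fintype.sum_bijective g8b g8bbij (f ∘ g8b) f (fun _ => rfl)]
  simp [Fin.sum_univ_eight, g8b]

set_option maxHeartbeats 8000000 in
/-- For the pseudo-telepathic correlation `P` of the `NC(C₃)`
graph-state strategy and any payoff parameters `v₀, v₁ > 0`, the social welfare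
equals `(v₀ + v₁)/2`. -/
theorem socialWelfare_pseudotelepathic (v0 v1 : ℝ) (hv0 : 0 < v0) (hv1 : 0 < v1) :
    socialWelfare (NC3 v0 v1) Pgraph = (v0 + v1) / 2 := by
  unfold socialWelfare
  simp only [Fin.sum_univ_three, sum_pi3b, NC3]
  simp (config := { decide := true }) only [Pgraph_eq, NC3prior, validQuestions, NC3win, parity, q100, q010, q001, q111, Finset.mem_insert, Finset.mem_singleton, Matrix.cons_val_zero, Matrix.cons_val_one, Matrix.head_cons, if_true, if_false]
  simp (disch := decide) only [Pgraph_eq, if_pos, if_neg]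
  norm_num
  try ring

end

end QG
end
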